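/- Let k be a field and V, W vector spaces over k equipped with linear maps coev : k → V ⊗ W and ev : W ⊗ V → k satisfying the zigzag identities (id_V ⊗ ev) ∘ (coev ⊗ id_V) = id_V and (ev ⊗ id_W) ∘ (id_W ⊗ coev) = id_W. Then V is finite-dimensional and W is isomorphic to the dual space V*. -/
import Mathlib


open TensorProduct

/-- If vector spaces V, W over a field k carry maps coev : k → V ⊗ W and
ev : W ⊗ V → k satisfying the zigzag identities, then V is finite-dimensional
and W is isomorphic to the dual space V*. -/
theorem zigzag_implies_finiteDimensional_and_dual
    (k V W : Type*) [Field k] [AddCommGroup V] [Module k V]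
    [AddCommGroup W] [Module k W]
    (coev : k →ₗ[k] V ⊗[k] W) (ev : W ⊗[k] V →ₗ[k] k)
    (zig1 : (TensorProduct.rid k V).toLinearMap
        ∘ₗ TensorProduct.map (LinearMap.id : V →ₗ[k] V) ev
        ∘ₗ (TensorProduct.assoc k V W V).toLinearMap
        ∘ₗ TensorProduct.map coev (LinearMap.id : V →ₗ[k] V)
        ∘ₗ (TensorProduct.lid k V).symm.toLinearMap = LinearMap.id)
    (zig2 : (TensorProduct.lid k W).toLinearMap
        ∘ₗ TensorProduct.map ev (LinearMap.id : W →ₗ[k] W)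
        ∘ₗ (TensorProduct.assoc k W V W).symm.toLinearMap
        ∘ₗ TensorProduct.map (LinearMap.id : W →ₗ[k] W) coev
        ∘ₗ (TensorProduct.rid k W).symm.toLinearMap = LinearMap.id) :
    FiniteDimensional k V ∧ Nonempty (W ≃ₗ[k] Module.Dual k V) := by
  classical
  obtain ⟨S, hS⟩ := TensorProduct.exists_finset (coev 1)
  -- pointwise zigzag identities
  have zig1' : ∀ x : V, ∑ p ∈ S, ev (p.2 ⊗ₜ[k] x) • p.1 = x := by
    intro x
    have h := congrFun (congrArg DFunLike.coe zig1) x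
    simpa [hS, TensorProduct.sum_tmul, map_sum, TensorProduct.smul_tmul',
      TensorProduct.smul_tmul] using h
  have zig2' : ∀ w : W, ∑ p ∈ S, ev (w ⊗ₜ[k] p.1) • p.2 = w := by
    intro w
    have h := congrFun (congrArg DFunLike.coe zig2) w
    simpa [hS, TensorProduct.tmul_sum, map_sum, TensorProduct.smul_tmul',
      TensorProduct.smul_tmul] using h
  have hfin : FiniteDimensional k V := by
    refine ⟨⟨S.image Prod.fst, le_antisymm le_top ?_⟩⟩
    intro x _
    rw [← zig1' x]
    exact Submodule.sum_mem _ fun p hp => Submodule.smul_mem _ _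
      (Submodule.subset_span (Finset.mem_image_of_mem _ hp))
  refine ⟨hfin, ⟨LinearEquiv.ofBijective (TensorProduct.curry ev) ⟨?_, ?_⟩⟩⟩
  · rw [← LinearMap.ker_eq_bot, LinearMap.ker_eq_bot']
    intro w hw
    have hw' : ∀ v : V, ev (w ⊗ₜ[k] v) = 0 := fun v =>
      congrFun (congrArg DFunLike.coe hw) v
    rw [← zig2' w]
    simp [hw']
  · intro f
    refine ⟨∑ p ∈ S, f p.1 • p.2, ?_⟩
    ext x
    have := congrArg f (zig1' x)
    simp only [map_sum, map_smul, smul_eq_mul] at this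
    simp only [LinearMap.sum_apply, LinearMap.smul_apply, TensorProduct.curry_apply,
      smul_eq_mul]
    rw [TensorProduct.sum_tmul]
    simp only [← TensorProduct.smul_tmul']
    rw [map_sum]
    simp only [map_smul, smul_eq_mul]
    rw [← this]
    refine Finset.sum_congr rfl fun p _ => ?_
    exact mul_comm (f p.1) (ev (p.2 ⊗ₜ[k] x))
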